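/- arXiv:2405.10349 — 6 statements merged into one kernel-verified Lean document; each statement's English description precedes it below -/
import Mathlib

section
/- The operator sym∘Curl on ℝ^{3×3}-valued fields is cancelling: the intersection over all nonzero ξ ∈ ℝ³ of the images { sym(P · Anti(ξ)) : P ∈ ℝ^{3×3} } is {0}. -/
open Matrix

noncomputable section

def Anti (ξ : Fin 3 → ℝ) : Matrix (Fin 3) (Fin 3) ℝ :=
  !![0, -ξ 2, ξ 1; ξ 2, 0, -ξ 0; -ξ 1, ξ 0, 0]

def sym (X : Matrix (Fin 3) (Fin 3) ℝ) : Matrix (Fin 3) (Fin 3) ℝ := (1/2 : ℝ) • (X + Xᵀ)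

def skw (X : Matrix (Fin 3) (Fin 3) ℝ) : Matrix (Fin 3) (Fin 3) ℝ := (1/2 : ℝ) • (X - Xᵀ)

def dev (X : Matrix (Fin 3) (Fin 3) ℝ) : Matrix (Fin 3) (Fin 3) ℝ :=
  X - (Matrix.trace X / 3) • (1 : Matrix (Fin 3) (Fin 3) ℝ)

def cross (a b : Fin 3 → ℝ) : Fin 3 → ℝ :=
  ![a 1 * b 2 - a 2 * b 1, a 2 * b 0 - a 0 * b 2, a 0 * b 1 - a 1 * b 0]

/-!
Every `sym (P * Anti ξ)` is symmetric, and its quadratic form vanishes at `ξ` because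
`Anti ξ *ᵥ ξ = ξ × ξ = 0`. A matrix in the intersection is therefore symmetric with a quadratic
form vanishing everywhere, so it is zero by polarization.
-/

namespace Matrix

theorem eq_zero_of_transpose_eq_of_dotProduct_mulVec_self {n R : Type*} [Fintype n]
    [DecidableEq n] [CommRing R] [NoZeroDivisors R] [NeZero (2 : R)] {A : Matrix n n R}
    (hA : Aᵀ = A) (h : ∀ x, x ⬝ᵥ A *ᵥ x = 0) : A = 0 := by
  have polarize : ∀ x y, x ⬝ᵥ A *ᵥ y = 0 := fun x y => by
    have hswap : y ⬝ᵥ A *ᵥ x = x ⬝ᵥ A *ᵥ y := by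
      rw [← dotProduct_transpose_mulVec, hA]
    have hsum := h (x + y)
    simp only [mulVec_add, add_dotProduct, dotProduct_add, h x, h y, hswap] at hsum
    refine (mul_eq_zero.mp (?_ : (2 : R) * (x ⬝ᵥ A *ᵥ y) = 0)).resolve_left two_ne_zero
    linear_combination hsum
  ext i j
  simpa using polarize (Pi.single i 1) (Pi.single j 1)

end Matrix

theorem sym_transpose (X : Matrix (Fin 3) (Fin 3) ℝ) : (sym X)ᵀ = sym X := by
  simp only [sym, transpose_smul, transpose_add, transpose_transpose, add_comm]

theorem dotProduct_sym_mulVec_self (X : Matrix (Fin 3) (Fin 3) ℝ) (ξ : Fin 3 → ℝ) :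
    ξ ⬝ᵥ sym X *ᵥ ξ = ξ ⬝ᵥ X *ᵥ ξ := by
  rw [sym, smul_mulVec, add_mulVec, dotProduct_smul, dotProduct_add, dotProduct_transpose_mulVec,
    smul_eq_mul]
  ring

theorem Anti_mulVec_self (ξ : Fin 3 → ℝ) : Anti ξ *ᵥ ξ = 0 := by
  ext i
  fin_cases i <;> simp [Anti, mulVec, dotProduct, Fin.sum_univ_three] <;> ring

theorem dotProduct_sym_mul_Anti_mulVec_self (P : Matrix (Fin 3) (Fin 3) ℝ) (ξ : Fin 3 → ℝ) :
    ξ ⬝ᵥ sym (P * Anti ξ) *ᵥ ξ = 0 := by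
  rw [dotProduct_sym_mulVec_self, ← mulVec_mulVec, Anti_mulVec_self, mulVec_zero,
    dotProduct_zero]

theorem stmt_2 (E : Matrix (Fin 3) (Fin 3) ℝ)
    (h : ∀ ξ : Fin 3 → ℝ, ξ ≠ 0 → ∃ P : Matrix (Fin 3) (Fin 3) ℝ, sym (P * Anti ξ) = E) :
    E = 0 := by
  obtain ⟨P, rfl⟩ := h (Pi.single 0 1) (by simp)
  refine eq_zero_of_transpose_eq_of_dotProduct_mulVec_self (sym_transpose _) fun ξ => ?_
  rcases eq_or_ne ξ 0 with rfl | hξ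
  · exact zero_dotProduct _
  · obtain ⟨Q, hQ⟩ := h ξ hξ
    rw [← hQ]
    exact dotProduct_sym_mul_Anti_mulVec_self Q ξ
end
end

section
/- Let Q ∈ ℝ^{3×3} be symmetric and trace-free and ξ ∈ ℝ³ with ξ ≠ 0. Then dev sym( Anti(ξ) · (Anti(Qξ) − Anti(ξ)·Q) ) = |ξ|² Q, where dev(X) = X − (tr X / 3) Id₃ and sym(X) = (X+Xᵀ)/2. -/
open Matrix

noncomputable section

set_option maxHeartbeats 2000000 in
theorem stmt_5 (Q : Matrix (Fin 3) (Fin 3) ℝ) (hsym : Qᵀ = Q) (htr : Matrix.trace Q = 0)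
    (ξ : Fin 3 → ℝ) (hξ : ξ ≠ 0) :
    dev (sym (Anti ξ * (Anti (Q *ᵥ ξ) - Anti ξ * Q))) = (ξ ⬝ᵥ ξ) • Q := by
  have h01 : Q 1 0 = Q 0 1 := by
    simpa [Matrix.transpose_apply] using congrFun (congrFun hsym 0) 1
  have h02 : Q 2 0 = Q 0 2 := by
    simpa [Matrix.transpose_apply] using congrFun (congrFun hsym 0) 2
  have h12 : Q 2 1 = Q 1 2 := by
    simpa [Matrix.transpose_apply] using congrFun (congrFun hsym 1) 2
  have ht : Q 0 0 + Q 1 1 + Q 2 2 = 0 := by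
    simpa [Matrix.trace, Fin.sum_univ_three] using htr
  have h22 : Q 2 2 = -Q 0 0 - Q 1 1 := by linarith
  have hQ : Q = !![Q 0 0, Q 0 1, Q 0 2; Q 0 1, Q 1 1, Q 1 2; Q 0 2, Q 1 2, -Q 0 0 - Q 1 1] := by
    ext i j
    fin_cases i <;> fin_cases j <;>
      simp [h01, h02, h12, h22]
  rw [hQ]
  ext i j
  fin_cases i <;> fin_cases j <;>
    · simp [dev, sym, Anti, Matrix.mul_apply, Matrix.mulVec, dotProduct,
        Matrix.trace, Fin.sum_univ_three, Matrix.one_apply, Matrix.vecHead, Matrix.vecTail]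
      ring
end
end

section
/- The operator dev∘sym∘Curl on ℝ^{3×3}-valued fields is not cancelling: every symmetric trace-free matrix Q ∈ ℝ^{3×3} lies in ⋂_{ξ ∈ ℝ³∖{0}} { dev sym(P · Anti(ξ)) : P ∈ ℝ^{3×3} }. -/
open Matrix

noncomputable section

lemma sym_smul (c : ℝ) (X : Matrix (Fin 3) (Fin 3) ℝ) : sym (c • X) = c • sym X := by
  simp [sym, Matrix.transpose_smul, smul_add, smul_comm c]

lemma dev_smul (c : ℝ) (X : Matrix (Fin 3) (Fin 3) ℝ) : dev (c • X) = c • dev X := by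
  simp [dev, Matrix.trace_smul, smul_sub, smul_smul, smul_eq_mul, mul_div_assoc, mul_comm]

set_option maxHeartbeats 1000000 in
theorem stmt_6 (Q : Matrix (Fin 3) (Fin 3) ℝ) (hsym : Qᵀ = Q) (htr : Matrix.trace Q = 0) :
    ∀ ξ : Fin 3 → ℝ, ξ ≠ 0 → ∃ P : Matrix (Fin 3) (Fin 3) ℝ, dev (sym (P * Anti ξ)) = Q := by
  intro ξ hξ
  have hn : ξ 0 ^ 2 + ξ 1 ^ 2 + ξ 2 ^ 2 ≠ 0 := by
    intro h
    apply hξ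
    funext i
    have h0 : ξ 0 = 0 ∧ ξ 1 = 0 ∧ ξ 2 = 0 := by
      refine ⟨?_, ?_, ?_⟩ <;>
        nlinarith [sq_nonneg (ξ 0), sq_nonneg (ξ 1), sq_nonneg (ξ 2)]
    fin_cases i <;> simp [h0.1, h0.2.1, h0.2.2]
  have h10 : Q 1 0 = Q 0 1 := by
    conv_lhs => rw [← hsym, Matrix.transpose_apply]
  have h20 : Q 2 0 = Q 0 2 := by
    conv_lhs => rw [← hsym, Matrix.transpose_apply]
  have h21 : Q 2 1 = Q 1 2 := by
    conv_lhs => rw [← hsym, Matrix.transpose_apply]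
  have h22 : Q 2 2 = -Q 0 0 - Q 1 1 := by
    have := htr
    simp [Matrix.trace, Fin.sum_univ_three, Matrix.diag] at this
    linarith
  set P₀ : Matrix (Fin 3) (Fin 3) ℝ :=
    !![-2 * Q 0 1 * ξ 2 + 2 * Q 0 2 * ξ 1 + Q 1 0 * ξ 2 - Q 2 0 * ξ 1,
       2 * Q 0 0 * ξ 2 - 2 * Q 0 2 * ξ 0 + Q 1 1 * ξ 2 - Q 2 1 * ξ 1,
       -2 * Q 0 0 * ξ 1 + 2 * Q 0 1 * ξ 0 + Q 1 2 * ξ 2 - Q 2 2 * ξ 1;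
       -Q 0 0 * ξ 2 - 2 * Q 1 1 * ξ 2 + 2 * Q 1 2 * ξ 1 + Q 2 0 * ξ 0,
       -Q 0 1 * ξ 2 + 2 * Q 1 0 * ξ 2 - 2 * Q 1 2 * ξ 0 + Q 2 1 * ξ 0,
       -Q 0 2 * ξ 2 - 2 * Q 1 0 * ξ 1 + 2 * Q 1 1 * ξ 0 + Q 2 2 * ξ 0;
       Q 0 0 * ξ 1 - Q 1 0 * ξ 0 - 2 * Q 2 1 * ξ 2 + 2 * Q 2 2 * ξ 1,
       Q 0 1 * ξ 1 - Q 1 1 * ξ 0 + 2 * Q 2 0 * ξ 2 - 2 * Q 2 2 * ξ 0,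
       Q 0 2 * ξ 1 - Q 1 2 * ξ 0 - 2 * Q 2 0 * ξ 1 + 2 * Q 2 1 * ξ 0] with hP₀
  set X₀ : Matrix (Fin 3) (Fin 3) ℝ :=
    !![2 * Q 0 0 * ξ 1 * ξ 1 + 2 * Q 0 0 * ξ 2 * ξ 2 - 2 * Q 0 1 * ξ 0 * ξ 1 - 2 * Q 0 2 * ξ 0 * ξ 2 + Q 1 1 * ξ 2 * ξ 2 - Q 1 2 * ξ 1 * ξ 2 - Q 2 1 * ξ 1 * ξ 2 + Q 2 2 * ξ 1 * ξ 1,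
       -2 * Q 0 0 * ξ 0 * ξ 1 + 2 * Q 0 1 * ξ 0 * ξ 0 + 2 * Q 0 1 * ξ 2 * ξ 2 - 2 * Q 0 2 * ξ 1 * ξ 2 - Q 1 0 * ξ 2 * ξ 2 + Q 1 2 * ξ 0 * ξ 2 + Q 2 0 * ξ 1 * ξ 2 - Q 2 2 * ξ 0 * ξ 1,
       -2 * Q 0 0 * ξ 0 * ξ 2 - 2 * Q 0 1 * ξ 1 * ξ 2 + 2 * Q 0 2 * ξ 0 * ξ 0 + 2 * Q 0 2 * ξ 1 * ξ 1 + Q 1 0 * ξ 1 * ξ 2 - Q 1 1 * ξ 0 * ξ 2 - Q 2 0 * ξ 1 * ξ 1 + Q 2 1 * ξ 0 * ξ 1;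
       -Q 0 1 * ξ 2 * ξ 2 + Q 0 2 * ξ 1 * ξ 2 + 2 * Q 1 0 * ξ 1 * ξ 1 + 2 * Q 1 0 * ξ 2 * ξ 2 - 2 * Q 1 1 * ξ 0 * ξ 1 - 2 * Q 1 2 * ξ 0 * ξ 2 + Q 2 1 * ξ 0 * ξ 2 - Q 2 2 * ξ 0 * ξ 1,
       Q 0 0 * ξ 2 * ξ 2 - Q 0 2 * ξ 0 * ξ 2 - 2 * Q 1 0 * ξ 0 * ξ 1 + 2 * Q 1 1 * ξ 0 * ξ 0 + 2 * Q 1 1 * ξ 2 * ξ 2 - 2 * Q 1 2 * ξ 1 * ξ 2 - Q 2 0 * ξ 0 * ξ 2 + Q 2 2 * ξ 0 * ξ 0,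
       -Q 0 0 * ξ 1 * ξ 2 + Q 0 1 * ξ 0 * ξ 2 - 2 * Q 1 0 * ξ 0 * ξ 2 - 2 * Q 1 1 * ξ 1 * ξ 2 + 2 * Q 1 2 * ξ 0 * ξ 0 + 2 * Q 1 2 * ξ 1 * ξ 1 + Q 2 0 * ξ 0 * ξ 1 - Q 2 1 * ξ 0 * ξ 0;
       Q 0 1 * ξ 1 * ξ 2 - Q 0 2 * ξ 1 * ξ 1 - Q 1 1 * ξ 0 * ξ 2 + Q 1 2 * ξ 0 * ξ 1 + 2 * Q 2 0 * ξ 1 * ξ 1 + 2 * Q 2 0 * ξ 2 * ξ 2 - 2 * Q 2 1 * ξ 0 * ξ 1 - 2 * Q 2 2 * ξ 0 * ξ 2,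
       -Q 0 0 * ξ 1 * ξ 2 + Q 0 2 * ξ 0 * ξ 1 + Q 1 0 * ξ 0 * ξ 2 - Q 1 2 * ξ 0 * ξ 0 - 2 * Q 2 0 * ξ 0 * ξ 1 + 2 * Q 2 1 * ξ 0 * ξ 0 + 2 * Q 2 1 * ξ 2 * ξ 2 - 2 * Q 2 2 * ξ 1 * ξ 2,
       Q 0 0 * ξ 1 * ξ 1 - Q 0 1 * ξ 0 * ξ 1 - Q 1 0 * ξ 0 * ξ 1 + Q 1 1 * ξ 0 * ξ 0 - 2 * Q 2 0 * ξ 0 * ξ 2 - 2 * Q 2 1 * ξ 1 * ξ 2 + 2 * Q 2 2 * ξ 0 * ξ 0 + 2 * Q 2 2 * ξ 1 * ξ 1] with hX₀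
  have hX : P₀ * Anti ξ = X₀ := by
    ext i j
    fin_cases i <;> fin_cases j <;>
      simp [hP₀, hX₀, Anti, Matrix.mul_apply, Fin.sum_univ_three] <;> ring
  set X₀t : Matrix (Fin 3) (Fin 3) ℝ :=
    !![2 * Q 0 0 * ξ 1 * ξ 1 + 2 * Q 0 0 * ξ 2 * ξ 2 - 2 * Q 0 1 * ξ 0 * ξ 1 - 2 * Q 0 2 * ξ 0 * ξ 2 + Q 1 1 * ξ 2 * ξ 2 - Q 1 2 * ξ 1 * ξ 2 - Q 2 1 * ξ 1 * ξ 2 + Q 2 2 * ξ 1 * ξ 1,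
       -Q 0 1 * ξ 2 * ξ 2 + Q 0 2 * ξ 1 * ξ 2 + 2 * Q 1 0 * ξ 1 * ξ 1 + 2 * Q 1 0 * ξ 2 * ξ 2 - 2 * Q 1 1 * ξ 0 * ξ 1 - 2 * Q 1 2 * ξ 0 * ξ 2 + Q 2 1 * ξ 0 * ξ 2 - Q 2 2 * ξ 0 * ξ 1,
       Q 0 1 * ξ 1 * ξ 2 - Q 0 2 * ξ 1 * ξ 1 - Q 1 1 * ξ 0 * ξ 2 + Q 1 2 * ξ 0 * ξ 1 + 2 * Q 2 0 * ξ 1 * ξ 1 + 2 * Q 2 0 * ξ 2 * ξ 2 - 2 * Q 2 1 * ξ 0 * ξ 1 - 2 * Q 2 2 * ξ 0 * ξ 2;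
       -2 * Q 0 0 * ξ 0 * ξ 1 + 2 * Q 0 1 * ξ 0 * ξ 0 + 2 * Q 0 1 * ξ 2 * ξ 2 - 2 * Q 0 2 * ξ 1 * ξ 2 - Q 1 0 * ξ 2 * ξ 2 + Q 1 2 * ξ 0 * ξ 2 + Q 2 0 * ξ 1 * ξ 2 - Q 2 2 * ξ 0 * ξ 1,
       Q 0 0 * ξ 2 * ξ 2 - Q 0 2 * ξ 0 * ξ 2 - 2 * Q 1 0 * ξ 0 * ξ 1 + 2 * Q 1 1 * ξ 0 * ξ 0 + 2 * Q 1 1 * ξ 2 * ξ 2 - 2 * Q 1 2 * ξ 1 * ξ 2 - Q 2 0 * ξ 0 * ξ 2 + Q 2 2 * ξ 0 * ξ 0,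
       -Q 0 0 * ξ 1 * ξ 2 + Q 0 2 * ξ 0 * ξ 1 + Q 1 0 * ξ 0 * ξ 2 - Q 1 2 * ξ 0 * ξ 0 - 2 * Q 2 0 * ξ 0 * ξ 1 + 2 * Q 2 1 * ξ 0 * ξ 0 + 2 * Q 2 1 * ξ 2 * ξ 2 - 2 * Q 2 2 * ξ 1 * ξ 2;
       -2 * Q 0 0 * ξ 0 * ξ 2 - 2 * Q 0 1 * ξ 1 * ξ 2 + 2 * Q 0 2 * ξ 0 * ξ 0 + 2 * Q 0 2 * ξ 1 * ξ 1 + Q 1 0 * ξ 1 * ξ 2 - Q 1 1 * ξ 0 * ξ 2 - Q 2 0 * ξ 1 * ξ 1 + Q 2 1 * ξ 0 * ξ 1,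
       -Q 0 0 * ξ 1 * ξ 2 + Q 0 1 * ξ 0 * ξ 2 - 2 * Q 1 0 * ξ 0 * ξ 2 - 2 * Q 1 1 * ξ 1 * ξ 2 + 2 * Q 1 2 * ξ 0 * ξ 0 + 2 * Q 1 2 * ξ 1 * ξ 1 + Q 2 0 * ξ 0 * ξ 1 - Q 2 1 * ξ 0 * ξ 0,
       Q 0 0 * ξ 1 * ξ 1 - Q 0 1 * ξ 0 * ξ 1 - Q 1 0 * ξ 0 * ξ 1 + Q 1 1 * ξ 0 * ξ 0 - 2 * Q 2 0 * ξ 0 * ξ 2 - 2 * Q 2 1 * ξ 1 * ξ 2 + 2 * Q 2 2 * ξ 0 * ξ 0 + 2 * Q 2 2 * ξ 1 * ξ 1] with hX₀t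
  have hT : X₀ᵀ = X₀t := by
    ext i j
    fin_cases i <;> fin_cases j <;>
      simp [hX₀, hX₀t, Matrix.transpose_apply]
  have hD : dev (sym X₀) = (ξ 0 ^ 2 + ξ 1 ^ 2 + ξ 2 ^ 2) • Q := by
    rw [sym, hT]
    ext i j
    fin_cases i <;> fin_cases j <;>
      · simp [hX₀, hX₀t, dev, Matrix.trace, Fin.sum_univ_three, Matrix.diag,
          Matrix.one_apply, h10, h20, h21, h22]
        ring
  refine ⟨((ξ 0 ^ 2 + ξ 1 ^ 2 + ξ 2 ^ 2)⁻¹) • P₀, ?_⟩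
  rw [Matrix.smul_mul, hX, sym_smul, dev_smul, hD, smul_smul,
    inv_mul_cancel₀ hn, one_smul]

end
end

section
/- The operator dev∘Curl on ℝ^{3×3}-valued fields is cancelling: ⋂_{ξ ∈ ℝ³∖{0}} { dev(P · Anti(ξ)) : P ∈ ℝ^{3×3} } = {0}. -/
open Matrix

noncomputable section

theorem stmt_9 (E : Matrix (Fin 3) (Fin 3) ℝ)
    (h : ∀ ξ : Fin 3 → ℝ, ξ ≠ 0 → ∃ P : Matrix (Fin 3) (Fin 3) ℝ, dev (P * Anti ξ) = E) :
    E = 0 := by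
  obtain ⟨P1, hP1⟩ := h ![1,0,0] (by intro hξ; simpa using congrFun hξ 0)
  obtain ⟨P2, hP2⟩ := h ![0,1,0] (by intro hξ; simpa using congrFun hξ 1)
  obtain ⟨P3, hP3⟩ := h ![0,0,1] (by intro hξ; simpa using congrFun hξ 2)
  obtain ⟨P4, hP4⟩ := h ![1,1,0] (by intro hξ; simpa using congrFun hξ 0)
  obtain ⟨P5, hP5⟩ := h ![1,0,1] (by intro hξ; simpa using congrFun hξ 0)
  have a10 := congrFun (congrFun hP1 1) 0
  have a20 := congrFun (congrFun hP1 2) 0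
  have a00 := congrFun (congrFun hP1 0) 0
  have a11 := congrFun (congrFun hP1 1) 1
  have a22 := congrFun (congrFun hP1 2) 2
  have b01 := congrFun (congrFun hP2 0) 1
  have b21 := congrFun (congrFun hP2 2) 1
  have c02 := congrFun (congrFun hP3 0) 2
  have c12 := congrFun (congrFun hP3 1) 2
  have d00 := congrFun (congrFun hP4 0) 0
  have d01 := congrFun (congrFun hP4 0) 1
  have d10 := congrFun (congrFun hP4 1) 0
  have d11 := congrFun (congrFun hP4 1) 1
  have e00 := congrFun (congrFun hP5 0) 0
  have e02 := congrFun (congrFun hP5 0) 2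
  have e20 := congrFun (congrFun hP5 2) 0
  have e22 := congrFun (congrFun hP5 2) 2
  simp [dev, Anti, Matrix.mul_apply, Fin.sum_univ_three, Matrix.trace_fin_three,
    Matrix.one_apply] at a10 a20 a00 a11 a22 b01 b21 c02 c12 d00 d01 d10 d11 e00 e02 e20 e22
  ext i j
  fin_cases i <;> fin_cases j
  · show E 0 0 = 0; linarith
  · show E 0 1 = 0; linarith
  · show E 0 2 = 0; linarith
  · show E 1 0 = 0; linarith
  · show E 1 1 = 0; linarith
  · show E 1 2 = 0; linarith
  · show E 2 0 = 0; linarith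
  · show E 2 1 = 0; linarith
  · show E 2 2 = 0; linarith
end
end

section
/- The operator P ↦ skew(Curl P) + tr(Curl P)·Id₃ restricted to skew-symmetric valued fields is not cancelling: ℝ·Id₃ ⊆ ⋂_{ξ ∈ ℝ³∖{0}} { skew(S·Anti ξ) + tr(S·Anti ξ)·Id₃ : S ∈ ℝ^{3×3} skew-symmetric }. -/
open Matrix

noncomputable section

/-! Since `Anti a * Anti ξ = ξ aᵀ - ⟨a, ξ⟩ • 1`, the operator `S ↦ skw (S * Anti ξ) + tr (S * Anti ξ) • 1`
sends `Anti a` to `½ Anti (a × ξ) - 2⟨a, ξ⟩ • 1`. For `a` parallel to `ξ` the cross product vanishes,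
and `a = -c / (2 |ξ|²) • ξ` gives `c • 1`. -/

lemma Anti_transpose (a : Fin 3 → ℝ) : (Anti a)ᵀ = -Anti a := by
  ext i j
  fin_cases i <;> fin_cases j <;> simp [Anti]

lemma Anti_zero : Anti 0 = 0 := by
  ext i j
  fin_cases i <;> fin_cases j <;> simp [Anti]

lemma cross_smul_left_self (t : ℝ) (ξ : Fin 3 → ℝ) : cross (t • ξ) ξ = 0 := by
  ext i
  fin_cases i <;> simp [cross] <;> ring

lemma Anti_mul_Anti (a ξ : Fin 3 → ℝ) :
    Anti a * Anti ξ = vecMulVec ξ a - (a ⬝ᵥ ξ) • (1 : Matrix (Fin 3) (Fin 3) ℝ) := by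
  ext i j
  fin_cases i <;> fin_cases j <;>
    simp [Anti, Matrix.mul_apply, Fin.sum_univ_three, vecMulVec_apply, dotProduct] <;> ring

lemma skw_vecMulVec (a ξ : Fin 3 → ℝ) : skw (vecMulVec ξ a) = (1/2 : ℝ) • Anti (cross a ξ) := by
  ext i j
  fin_cases i <;> fin_cases j <;> simp [skw, Anti, cross, vecMulVec_apply] <;> ring

lemma skw_sub_smul_one (X : Matrix (Fin 3) (Fin 3) ℝ) (s : ℝ) : skw (X - s • 1) = skw X := by
  simp only [skw, transpose_sub, transpose_smul, transpose_one]
  abel_nf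

lemma skw_Anti_mul_Anti_add_trace_smul_one (a ξ : Fin 3 → ℝ) :
    skw (Anti a * Anti ξ) + Matrix.trace (Anti a * Anti ξ) • (1 : Matrix (Fin 3) (Fin 3) ℝ) =
      (1/2 : ℝ) • Anti (cross a ξ) - (2 * (a ⬝ᵥ ξ)) • (1 : Matrix (Fin 3) (Fin 3) ℝ) := by
  have htrace : Matrix.trace (Anti a * Anti ξ) = -2 * (a ⬝ᵥ ξ) := by
    rw [Anti_mul_Anti, trace_sub, trace_vecMulVec, trace_smul, trace_one, dotProduct_comm]
    norm_num
    ring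
  rw [htrace, Anti_mul_Anti, skw_sub_smul_one, skw_vecMulVec, neg_mul, neg_smul, ← sub_eq_add_neg]

theorem stmt_11 (c : ℝ) (ξ : Fin 3 → ℝ) (hξ : ξ ≠ 0) :
    ∃ S : Matrix (Fin 3) (Fin 3) ℝ, Sᵀ = -S ∧
      skw (S * Anti ξ) + Matrix.trace (S * Anti ξ) • (1 : Matrix (Fin 3) (Fin 3) ℝ) =
        c • (1 : Matrix (Fin 3) (Fin 3) ℝ) := by
  have hξξ : ξ ⬝ᵥ ξ ≠ 0 := dotProduct_self_eq_zero.not.mpr hξ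
  refine ⟨Anti ((-c / (2 * (ξ ⬝ᵥ ξ))) • ξ), Anti_transpose _, ?_⟩
  rw [skw_Anti_mul_Anti_add_trace_smul_one, cross_smul_left_self, Anti_zero, smul_zero, zero_sub,
    smul_dotProduct, smul_eq_mul, ← neg_smul]
  congr 1
  field_simp
end
end

section
/- For every smooth ζ : ℝ³ → ℝ, Kröner's incompatibility operator inc = Curl ∘ Curlᵀ applied to the spherical field ζ·Id₃ satisfies tr(inc(ζ·Id₃)) = 2Δζ and skew(inc(ζ·Id₃)) = 0. -/
open Matrix

noncomputable section

def pd (i : Fin 3) (f : (Fin 3 → ℝ) → ℝ) (x : Fin 3 → ℝ) : ℝ := fderiv ℝ f x (Pi.single i 1)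

def grad (f : (Fin 3 → ℝ) → ℝ) (x : Fin 3 → ℝ) : Fin 3 → ℝ := fun i => pd i f x

def vcurl (u : (Fin 3 → ℝ) → Fin 3 → ℝ) (x : Fin 3 → ℝ) : Fin 3 → ℝ :=
  ![pd 1 (fun y => u y 2) x - pd 2 (fun y => u y 1) x,
    pd 2 (fun y => u y 0) x - pd 0 (fun y => u y 2) x,
    pd 0 (fun y => u y 1) x - pd 1 (fun y => u y 0) x]

def MCurl (P : (Fin 3 → ℝ) → Matrix (Fin 3) (Fin 3) ℝ) (x : Fin 3 → ℝ) :
    Matrix (Fin 3) (Fin 3) ℝ :=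
  Matrix.of fun i j => vcurl (fun y => P y i) x j

def lap (f : (Fin 3 → ℝ) → ℝ) (x : Fin 3 → ℝ) : ℝ := ∑ i : Fin 3, pd i (fun y => pd i f y) x

def hess (f : (Fin 3 → ℝ) → ℝ) (x : Fin 3 → ℝ) : Matrix (Fin 3) (Fin 3) ℝ :=
  Matrix.of fun i j => pd i (fun y => pd j f y) x

def Minc (P : (Fin 3 → ℝ) → Matrix (Fin 3) (Fin 3) ℝ) (x : Fin 3 → ℝ) :
    Matrix (Fin 3) (Fin 3) ℝ :=
  MCurl (fun y => (MCurl P y)ᵀ) x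


lemma pd_const' (i : Fin 3) (c : ℝ) (x) : pd i (fun _ => c) x = 0 := by simp [pd]

lemma pd_neg' (i : Fin 3) (f : (Fin 3 → ℝ) → ℝ) (x) :
    pd i (fun y => -f y) x = -pd i f x := by simp [pd, fderiv_neg]

lemma pd_symm' (ζ : (Fin 3 → ℝ) → ℝ) (hζ : ContDiff ℝ (⊤ : ℕ∞) ζ) (i j : Fin 3) (x) :
    pd i (fun y => pd j ζ y) x = pd j (fun y => pd i ζ y) x := by
  have hd : Differentiable ℝ (fderiv ℝ ζ) := (hζ.fderiv_right (m := 1) (by exact WithTop.coe_le_coe.mpr (le_top : ((1 + 1 : ℕ) : ℕ∞) ≤ ⊤))).differentiable one_ne_zero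
  have key : ∀ a b : Fin 3, pd a (fun y => pd b ζ y) x
      = fderiv ℝ (fderiv ℝ ζ) x (Pi.single a 1) (Pi.single b 1) := by
    intro a b
    have : pd a (fun y => pd b ζ y) x
        = fderiv ℝ (fun y => (fderiv ℝ ζ y) (Pi.single b 1)) x (Pi.single a 1) := rfl
    rw [this, fderiv_clm_apply (hd x) (differentiableAt_const _)]
    simp
  have hsym := (hζ.contDiffAt (x := x)).isSymmSndFDerivAt (by rw [minSmoothness_of_isRCLikeNormedField]; exact WithTop.coe_le_coe.mpr (le_top : ((2 : ℕ) : ℕ∞) ≤ ⊤))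
  rw [key, key, hsym]

lemma mcurl_sph (ζ : (Fin 3 → ℝ) → ℝ) (y : Fin 3 → ℝ) :
    (MCurl (fun z => ζ z • (1 : Matrix (Fin 3) (Fin 3) ℝ)) y)ᵀ = Anti (grad ζ y) := by
  ext i j
  fin_cases i <;> fin_cases j <;>
    simp [MCurl, vcurl, Anti, grad, Matrix.one_apply, pd_const', pd]

lemma minc_sph (ζ : (Fin 3 → ℝ) → ℝ) (x : Fin 3 → ℝ) :
    Minc (fun y => ζ y • (1 : Matrix (Fin 3) (Fin 3) ℝ)) x
      = lap ζ x • (1 : Matrix (Fin 3) (Fin 3) ℝ) - hess ζ x := by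
  have h : (fun y => (MCurl (fun z => ζ z • (1 : Matrix (Fin 3) (Fin 3) ℝ)) y)ᵀ)
      = fun y => Anti (grad ζ y) := funext (mcurl_sph ζ)
  rw [Minc, h]
  ext i j
  fin_cases i <;> fin_cases j <;>
    simp [MCurl, vcurl, Anti, grad, lap, hess, Matrix.one_apply, pd_const', pd_neg',
      Fin.sum_univ_three] <;> ring

theorem stmt_17 (ζ : (Fin 3 → ℝ) → ℝ) (hζ : ContDiff ℝ (⊤ : ℕ∞) ζ) (x : Fin 3 → ℝ) :
    Matrix.trace (Minc (fun y => ζ y • (1 : Matrix (Fin 3) (Fin 3) ℝ)) x) = 2 * lap ζ x ∧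
      skw (Minc (fun y => ζ y • (1 : Matrix (Fin 3) (Fin 3) ℝ)) x) = 0 := by
  rw [minc_sph]
  constructor
  · simp only [trace_sub, trace_smul, trace_one, smul_eq_mul]
    have : Matrix.trace (hess ζ x) = lap ζ x := by
      simp [Matrix.trace, hess, lap, Matrix.diag]
    rw [this]; norm_num [Fintype.card_fin]; ring
  · have hsymm : (hess ζ x)ᵀ = hess ζ x := by
      ext i j; exact pd_symm' ζ hζ j i x
    simp [skw, Matrix.transpose_sub, Matrix.transpose_smul, hsymm]
end
end
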